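/- For every g ∈ G₁, the imaginary part of I_g satisfies |Im(I_g)| < π/2, where I_g = −(1/π)∫_ℂ g(u)/(conj(u+1)·(u−1)) da(u). -/

import Mathlib

open MeasureTheory Real Set

section Aux

theorem lintegral_comp_polarCoord_symm' (f : ℝ × ℝ → ENNReal) :
    (∫⁻ p in polarCoord.target, ENNReal.ofReal p.1 * f (polarCoord.symm p)) = ∫⁻ p, f p := by
  set B : ℝ × ℝ → ℝ × ℝ →L[ℝ] ℝ × ℝ := fun p =>
    LinearMap.toContinuousLinearMap (Matrix.toLin (Module.Basis.finTwoProd ℝ) (Module.Basis.finTwoProd ℝ)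
      !![cos p.2, -p.1 * sin p.2; sin p.2, p.1 * cos p.2])
  have A : ∀ p ∈ polarCoord.target, HasFDerivWithinAt polarCoord.symm (B p) polarCoord.target p :=
    fun p _ => (hasFDerivAt_polarCoord_symm p).hasFDerivWithinAt
  have B_det : ∀ p, (B p).det = p.1 := by
    intro p
    conv_rhs => rw [← one_mul p.1, ← cos_sq_add_sin_sq p.2]
    simp only [B, neg_mul, LinearMap.det_toContinuousLinearMap, LinearMap.det_toLin,
      Matrix.det_fin_two_of, sub_neg_eq_add]
    ring
  symm
  calc
    ∫⁻ p, f p = ∫⁻ p in polarCoord.source, f p := by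
      rw [← setLIntegral_univ]
      exact setLIntegral_congr polarCoord_source_ae_eq_univ.symm
    _ = ∫⁻ p in polarCoord.symm '' polarCoord.target, f p := by
      rw [polarCoord.symm_image_target_eq_source]
    _ = ∫⁻ p in polarCoord.target, ENNReal.ofReal |(B p).det| * f (polarCoord.symm p) := by
      exact lintegral_image_eq_lintegral_abs_det_fderiv_mul volume
        polarCoord.open_target.measurableSet A polarCoord.symm.injOn f
    _ = ∫⁻ p in polarCoord.target, ENNReal.ofReal p.1 * f (polarCoord.symm p) := by
      refine setLIntegral_congr_fun polarCoord.open_target.measurableSet ?_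
      intro p hp
      beta_reduce
      rw [B_det, abs_of_pos hp.1]

theorem complex_lintegral_polar (f : ℂ → ENNReal) :
    (∫⁻ p in polarCoord.target, ENNReal.ofReal p.1 * f (Complex.polarCoord.symm p))
      = ∫⁻ z, f z := by
  have h1 : ∫⁻ z : ℂ, f z = ∫⁻ p : ℝ × ℝ, f (Complex.measurableEquivRealProd.symm p) := by
    exact ((Complex.volume_preserving_equiv_real_prod.symm
      Complex.measurableEquivRealProd).lintegral_comp_emb
      Complex.measurableEquivRealProd.symm.measurableEmbedding f).symm
  rw [h1, ← lintegral_comp_polarCoord_symm' (fun p => f (Complex.measurableEquivRealProd.symm p))]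
  refine setLIntegral_congr_fun polarCoord.open_target.measurableSet ?_
  intro p hp
  have : Complex.polarCoord.symm p = Complex.measurableEquivRealProd.symm (polarCoord.symm p) := by
    apply Complex.ext <;>
      simp [Complex.polarCoord_symm_apply, polarCoord_symm_apply,
        Complex.measurableEquivRealProd, Complex.equivRealProd] <;>
      exact Or.inl (by simp [Complex.cos_ofReal_re, Complex.sin_ofReal_re])
  beta_reduce
  rw [this]

lemma psi_integral (s : ℝ) (hs : 0 < s) :
    IntegrableOn (fun x : ℝ => s / (x ^ 2 + 4 * s ^ 2)) univ volume ∧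
      ∫ x : ℝ, s / (x ^ 2 + 4 * s ^ 2) = π / 2 := by
  have h2s : (2 * s) ≠ 0 := by positivity
  have hsurj : Function.Surjective (fun x : ℝ => x / (2 * s)) := by
    intro y; exact ⟨y * (2 * s), by field_simp⟩
  have himg : (fun x : ℝ => x / (2 * s)) '' univ = univ := by
    rw [image_univ]; exact hsurj.range_eq
  have hderiv : ∀ x ∈ (univ : Set ℝ),
      HasDerivWithinAt (fun x : ℝ => x / (2 * s)) (1 / (2 * s)) univ x := by
    intro x _
    exact ((hasDerivAt_id x).div_const (2 * s)).hasDerivWithinAt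
  have hinj : InjOn (fun x : ℝ => x / (2 * s)) univ := by
    intro a _ b _ h
    field_simp at h; exact h
  have key := integral_image_eq_integral_abs_deriv_smul (MeasurableSet.univ)
    hderiv hinj (fun x : ℝ => (1 + x ^ 2)⁻¹)
  rw [himg] at key
  have hptw : ∀ x : ℝ, |1 / (2 * s)| • (1 + (x / (2 * s)) ^ 2)⁻¹
      = 2 * (s / (x ^ 2 + 4 * s ^ 2)) := by
    intro x
    rw [abs_of_pos (by positivity), smul_eq_mul]
    rw [div_pow]
    field_simp
    ring
  have key2 : ∫ x : ℝ, (1 + x ^ 2)⁻¹ = ∫ x : ℝ, 2 * (s / (x ^ 2 + 4 * s ^ 2)) := by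
    rw [← setIntegral_univ, key, ← setIntegral_univ (μ := volume)
      (f := fun x => 2 * (s / (x ^ 2 + 4 * s ^ 2)))]
    exact setIntegral_congr_fun MeasurableSet.univ (fun x _ => hptw x)
  have hval : ∫ x : ℝ, 2 * (s / (x ^ 2 + 4 * s ^ 2)) = π := by
    rw [← key2]; exact integral_univ_inv_one_add_sq
  have hint : IntegrableOn (fun x : ℝ => s / (x ^ 2 + 4 * s ^ 2)) univ volume := by
    have := (integrableOn_image_iff_integrableOn_abs_deriv_smul MeasurableSet.univ
      hderiv hinj (fun x : ℝ => (1 + x ^ 2)⁻¹)).mp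
      (by rw [himg]; exact integrable_inv_one_add_sq.integrableOn)
    have h2 : IntegrableOn (fun x : ℝ => 2 * (s / (x ^ 2 + 4 * s ^ 2))) univ volume := by
      refine this.congr_fun (fun x _ => hptw x) MeasurableSet.univ
    have h3 := (h2.const_mul (1/2) : IntegrableOn _ univ volume)
    exact MeasureTheory.IntegrableOn.congr_fun h3 (fun x _ => by ring) MeasurableSet.univ
  refine ⟨hint, ?_⟩
  have : (2:ℝ) * ∫ x : ℝ, s / (x ^ 2 + 4 * s ^ 2) = π := by
    rw [← MeasureTheory.integral_const_mul]; exact hval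
  linarith

lemma glasser (s : ℝ) (hs : 0 < s) :
    IntegrableOn (fun r : ℝ => s * r ^ 2 / ((r ^ 2 - 1) ^ 2 + 4 * s ^ 2 * r ^ 2)) (Ioi 0) volume ∧
      ∫ r in Ioi 0, s * r ^ 2 / ((r ^ 2 - 1) ^ 2 + 4 * s ^ 2 * r ^ 2) = π / 4 := by
  set ψ : ℝ → ℝ := fun x => s / (x ^ 2 + 4 * s ^ 2) with hψ
  set φ : ℝ → ℝ := fun r => r - r⁻¹ with hφ
  have hψc : Continuous ψ := by
    apply continuous_const.div (by continuity)
    intro x; positivity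
  have hψnn : ∀ x, 0 ≤ ψ x := fun x => by positivity
  have hψeven : ∀ x, ψ (-x) = ψ x := fun x => by simp [hψ]
  have hφd : ∀ r ∈ Ioi 0, HasDerivWithinAt φ (1 + (r ^ 2)⁻¹) (Ioi 0) r := by
    intro r hr
    have h1 : HasDerivAt φ (1 - -(r ^ 2)⁻¹) r :=
      (hasDerivAt_id r).sub (hasDerivAt_inv (ne_of_gt hr))
    simpa [sub_neg_eq_add] using h1.hasDerivWithinAt
  have hφmono : StrictMonoOn φ (Ioi 0) := by
    intro a ha b hb hab
    have : b⁻¹ < a⁻¹ := by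
      rw [inv_lt_inv₀ (lt_trans ha hab) ha]; exact hab
    simp only [hφ]
    linarith
  have hφinj : InjOn φ (Ioi 0) := hφmono.injOn
  have hφimg : φ '' (Ioi 0) = univ := by
    apply eq_univ_of_forall
    intro x
    set r : ℝ := (x + Real.sqrt (x ^ 2 + 4)) / 2 with hrdef
    have hsq : Real.sqrt (x ^ 2 + 4) ^ 2 = x ^ 2 + 4 := Real.sq_sqrt (by positivity)
    have habs : |x| < Real.sqrt (x ^ 2 + 4) := by
      rw [← Real.sqrt_sq_eq_abs]
      exact Real.sqrt_lt_sqrt (by positivity) (by linarith)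
    have hrpos : 0 < r := by
      rw [abs_lt] at habs
      rw [hrdef]
      linarith [habs.1]
    refine ⟨r, hrpos, ?_⟩
    have hrne : r ≠ 0 := ne_of_gt hrpos
    have hquad : r * r - x * r - 1 = 0 := by
      rw [hrdef]; nlinarith [hsq]
    show r - r⁻¹ = x
    field_simp
    nlinarith [hquad]
  obtain ⟨hψint, hψval⟩ := psi_integral s hs
  have hcov := integral_image_eq_integral_abs_deriv_smul measurableSet_Ioi hφd hφinj ψ
  rw [hφimg] at hcov
  have habs1 : ∀ r ∈ Ioi (0:ℝ), |1 + (r ^ 2)⁻¹| • ψ (φ r) = (1 + (r ^ 2)⁻¹) * ψ (φ r) := by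
    intro r hr
    rw [smul_eq_mul, abs_of_pos (by positivity)]
  have hW : ∫ r in Ioi 0, (1 + (r ^ 2)⁻¹) * ψ (φ r) = π / 2 := by
    rw [← setIntegral_congr_fun measurableSet_Ioi habs1, ← hcov, setIntegral_univ, hψval]
  have hWint : IntegrableOn (fun r => (1 + (r ^ 2)⁻¹) * ψ (φ r)) (Ioi 0) volume := by
    have := (integrableOn_image_iff_integrableOn_abs_deriv_smul measurableSet_Ioi
      hφd hφinj ψ).mp (by rw [hφimg]; exact hψint)
    exact this.congr_fun habs1 measurableSet_Ioi
  have hφcont : ContinuousOn φ (Ioi 0) := by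
    apply ContinuousOn.sub continuousOn_id
    exact ContinuousOn.inv₀ continuousOn_id (fun r hr => ne_of_gt hr)
  have hmeasA : AEStronglyMeasurable (fun r => ψ (φ r)) (volume.restrict (Ioi 0)) :=
    (hψc.comp_continuousOn hφcont).aestronglyMeasurable measurableSet_Ioi
  have hA_int : IntegrableOn (fun r => ψ (φ r)) (Ioi 0) volume := by
    refine Integrable.mono' hWint hmeasA ?_
    filter_upwards [ae_restrict_mem measurableSet_Ioi] with r hr
    rw [Real.norm_eq_abs, abs_of_nonneg (hψnn _)]
    nlinarith [hψnn (φ r), sq_nonneg r, inv_nonneg.mpr (sq_nonneg r),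
      mul_nonneg (inv_nonneg.mpr (sq_nonneg r)) (hψnn (φ r))]
  have hV_int : IntegrableOn (fun r => (r ^ 2)⁻¹ * ψ (φ r)) (Ioi 0) volume := by
    refine Integrable.mono' hWint ?_ ?_
    · exact (((continuousOn_id.pow 2).inv₀ (fun r hr => by
        simpa using ne_of_gt (pow_pos (show (0:ℝ) < r from hr) 2))).mul
        (hψc.comp_continuousOn hφcont)).aestronglyMeasurable measurableSet_Ioi
    · filter_upwards [ae_restrict_mem measurableSet_Ioi] with r hr
      have h1 : 0 ≤ (r ^ 2)⁻¹ * ψ (φ r) :=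
        mul_nonneg (inv_nonneg.mpr (sq_nonneg r)) (hψnn _)
      rw [Real.norm_eq_abs, abs_of_nonneg h1]
      nlinarith [hψnn (φ r)]
  have hinvd : ∀ r ∈ Ioi (0:ℝ), HasDerivWithinAt (fun r : ℝ => r⁻¹) (-(r ^ 2)⁻¹) (Ioi 0) r :=
    fun r hr => (hasDerivAt_inv (ne_of_gt hr)).hasDerivWithinAt
  have hinvinj : InjOn (fun r : ℝ => r⁻¹) (Ioi 0) := by
    intro a ha b hb h
    simpa using congrArg Inv.inv h
  have hinvimg : (fun r : ℝ => r⁻¹) '' (Ioi 0) = Ioi 0 := by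
    ext x; constructor
    · rintro ⟨r, hr, rfl⟩; exact inv_pos.mpr (show (0:ℝ) < r from hr)
    · intro hx; exact ⟨x⁻¹, inv_pos.mpr (show (0:ℝ) < x from hx), inv_inv x⟩
  have hswap := integral_image_eq_integral_abs_deriv_smul measurableSet_Ioi hinvd hinvinj
    (fun x => ψ (φ x))
  rw [hinvimg] at hswap
  have hswap2 : ∫ r in Ioi 0, ψ (φ r) = ∫ r in Ioi 0, (r ^ 2)⁻¹ * ψ (φ r) := by
    rw [hswap]
    refine setIntegral_congr_fun measurableSet_Ioi (fun r hr => ?_)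
    have hφinv : φ r⁻¹ = -φ r := by
      simp only [hφ, inv_inv]; ring
    have habs2 : |(-(r ^ 2)⁻¹)| = (r ^ 2)⁻¹ := by
      rw [abs_neg, abs_of_pos (inv_pos.mpr (pow_pos hr 2))]
    rw [smul_eq_mul, hφinv, hψeven, habs2]
  have hsplit : ∫ r in Ioi 0, (1 + (r ^ 2)⁻¹) * ψ (φ r)
      = (∫ r in Ioi 0, ψ (φ r)) + ∫ r in Ioi 0, (r ^ 2)⁻¹ * ψ (φ r) := by
    rw [← integral_add hA_int hV_int]
    refine setIntegral_congr_fun measurableSet_Ioi (fun r hr => ?_)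
    ring
  have hAval : ∫ r in Ioi 0, ψ (φ r) = π / 4 := by
    have : (2:ℝ) * ∫ r in Ioi 0, ψ (φ r) = π / 2 := by
      rw [two_mul]
      nth_rewrite 2 [hswap2]
      rw [← hsplit, hW]
    linarith
  have hform : ∀ r ∈ Ioi (0:ℝ),
      ψ (φ r) = s * r ^ 2 / ((r ^ 2 - 1) ^ 2 + 4 * s ^ 2 * r ^ 2) := by
    intro r hr
    have hrne : r ≠ 0 := ne_of_gt hr
    have hd : (r - r⁻¹) ^ 2 + 4 * s ^ 2 = ((r ^ 2 - 1) ^ 2 + 4 * s ^ 2 * r ^ 2) / r ^ 2 := by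
      field_simp
    simp only [hψ, hφ]
    rw [hd]
    rw [div_div_eq_mul_div]
  constructor
  · exact hA_int.congr_fun hform measurableSet_Ioi
  · rw [← setIntegral_congr_fun measurableSet_Ioi hform, hAval]

lemma glasser_lintegral (s : ℝ) (hs : 0 < s) :
    ∫⁻ r in Ioi (0:ℝ), ENNReal.ofReal (s * r ^ 2 / ((r ^ 2 - 1) ^ 2 + 4 * s ^ 2 * r ^ 2))
      = ENNReal.ofReal (π / 4) := by
  obtain ⟨hint, hval⟩ := glasser s hs
  rw [← hval]
  exact (ofReal_integral_eq_lintegral_ofReal hint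
    (ae_of_all _ (fun r => div_nonneg (by positivity) (by positivity)))).symm

noncomputable def Fp (u : ℂ) : ℝ :=
  max u.im 0 / (Complex.normSq (u + 1) * Complex.normSq (u - 1))

noncomputable def Fm (u : ℂ) : ℝ :=
  max (-u.im) 0 / (Complex.normSq (u + 1) * Complex.normSq (u - 1))

lemma Fp_meas : Measurable Fp := by
  apply Measurable.div
  · exact (Complex.measurable_im.max measurable_const)
  · exact ((Complex.continuous_normSq.measurable.comp (measurable_id.add_const 1)).mul
      (Complex.continuous_normSq.measurable.comp (measurable_id.sub_const 1)))

lemma Fm_meas : Measurable Fm := by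
  apply Measurable.div
  · exact (Complex.measurable_im.neg.max measurable_const)
  · exact ((Complex.continuous_normSq.measurable.comp (measurable_id.add_const 1)).mul
      (Complex.continuous_normSq.measurable.comp (measurable_id.sub_const 1)))

lemma Fp_nonneg : ∀ u, 0 ≤ Fp u := fun u =>
  div_nonneg (le_max_right _ _) (mul_nonneg (Complex.normSq_nonneg _) (Complex.normSq_nonneg _))

lemma Fm_nonneg : ∀ u, 0 ≤ Fm u := fun u =>
  div_nonneg (le_max_right _ _) (mul_nonneg (Complex.normSq_nonneg _) (Complex.normSq_nonneg _))

lemma normSq_prod_polar (r θ : ℝ) :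
    Complex.normSq (Complex.polarCoord.symm (r, θ) + 1)
      * Complex.normSq (Complex.polarCoord.symm (r, θ) - 1)
      = (r ^ 2 - 1) ^ 2 + 4 * (sin θ) ^ 2 * r ^ 2 := by
  rw [Complex.polarCoord_symm_apply]
  simp only [Complex.normSq_apply, Complex.add_re, Complex.add_im, Complex.sub_re,
    Complex.sub_im, Complex.mul_re, Complex.mul_im, Complex.ofReal_re, Complex.ofReal_im,
    Complex.one_re, Complex.one_im, Complex.I_re, Complex.I_im]
  linear_combination (r ^ 4 * (sin θ ^ 2 + cos θ ^ 2 + 1) - 2 * r ^ 2) * (sin_sq_add_cos_sq θ)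

lemma polar_im (r θ : ℝ) : (Complex.polarCoord.symm (r, θ)).im = r * sin θ := by
  rw [Complex.polarCoord_symm_apply]
  simp [Complex.sin_ofReal_re]

lemma Jplus : ∫⁻ u : ℂ, ENNReal.ofReal (Fp u) = ENNReal.ofReal (π ^ 2 / 4) := by
  rw [← complex_lintegral_polar]
  have htarget : polarCoord.target = Ioi (0:ℝ) ×ˢ Ioo (-π) π := rfl
  have hmeasf : Measurable fun p : ℝ × ℝ =>
      ENNReal.ofReal p.1 * ENNReal.ofReal (Fp (Complex.polarCoord.symm p)) := by
    refine Measurable.mul (f := fun p : ℝ × ℝ => ENNReal.ofReal p.1)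
      (g := fun p : ℝ × ℝ => ENNReal.ofReal (Fp (Complex.polarCoord.symm p))) ?_ ?_
    · exact ENNReal.measurable_ofReal.comp measurable_fst
    · apply ENNReal.measurable_ofReal.comp
      apply Fp_meas.comp
      have : Continuous fun p : ℝ × ℝ => Complex.polarCoord.symm p := by
        simp only [Complex.polarCoord_symm_apply]
        continuity
      exact this.measurable
  rw [htarget, Measure.volume_eq_prod, ← Measure.prod_restrict]
  rw [lintegral_prod_symm _ hmeasf.aemeasurable]
  have hinner : ∀ θ ∈ Ioo (-π) π,
      (∫⁻ r in Ioi (0:ℝ), ENNReal.ofReal r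
          * ENNReal.ofReal (Fp (Complex.polarCoord.symm (r, θ))))
        = (Ioo (0:ℝ) π).indicator (fun _ => ENNReal.ofReal (π / 4)) θ := by
    intro θ hθ
    by_cases hθ2 : θ ∈ Ioo (0:ℝ) π
    · have hsin : 0 < sin θ := Real.sin_pos_of_pos_of_lt_pi hθ2.1 hθ2.2
      rw [indicator_of_mem hθ2]
      rw [← glasser_lintegral (sin θ) hsin]
      refine setLIntegral_congr_fun measurableSet_Ioi (fun r hr => ?_)
      have hr0 : (0:ℝ) < r := hr
      have hD : (0:ℝ) < (r ^ 2 - 1) ^ 2 + 4 * (sin θ) ^ 2 * r ^ 2 := by positivity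
      rw [← ENNReal.ofReal_mul hr0.le]
      congr 1
      unfold Fp
      rw [normSq_prod_polar, polar_im]
      rw [max_eq_left (by positivity : (0:ℝ) ≤ r * sin θ)]
      field_simp
    · have hsin : sin θ ≤ 0 := by
        have hθ0 : θ ≤ 0 := by
          by_contra h
          push_neg at h
          exact hθ2 ⟨h, hθ.2⟩
        exact sin_nonpos_of_nonpos_of_neg_pi_le hθ0 hθ.1.le
      rw [indicator_of_notMem hθ2]
      have : ∀ r ∈ Ioi (0:ℝ), ENNReal.ofReal r
          * ENNReal.ofReal (Fp (Complex.polarCoord.symm (r, θ))) = 0 := by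
        intro r hr
        have hr0 : (0:ℝ) < r := hr
        have : Fp (Complex.polarCoord.symm (r, θ)) = 0 := by
          unfold Fp
          rw [polar_im, max_eq_right (mul_nonpos_of_nonneg_of_nonpos hr0.le hsin), zero_div]
        rw [this, ENNReal.ofReal_zero, mul_zero]
      rw [setLIntegral_congr_fun measurableSet_Ioi this]
      simp
  rw [setLIntegral_congr_fun measurableSet_Ioo hinner]
  rw [lintegral_indicator_const measurableSet_Ioo]
  rw [Measure.restrict_apply measurableSet_Ioo]
  have hss : Ioo (0:ℝ) π ∩ Ioo (-π) π = Ioo (0:ℝ) π := by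
    apply inter_eq_left.mpr
    intro x hx
    exact ⟨by linarith [hx.1, pi_pos], hx.2⟩
  rw [hss, Real.volume_Ioo]
  rw [← ENNReal.ofReal_mul (by positivity)]
  congr 1
  ring

lemma Fm_eq_Fp_neg : ∀ u : ℂ, Fm u = Fp (-u) := by
  intro u
  unfold Fp Fm
  have h1 : -u + 1 = -(u - 1) := by ring
  have h2 : -u - 1 = -(u + 1) := by ring
  rw [h1, h2, Complex.normSq_neg, Complex.normSq_neg, Complex.neg_im, mul_comm]

lemma Jminus : ∫⁻ u : ℂ, ENNReal.ofReal (Fm u) = ENNReal.ofReal (π ^ 2 / 4) := by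
  have h1 : ∀ u : ℂ, ENNReal.ofReal (Fm u) = ENNReal.ofReal (Fp (-u)) := fun u => by
    rw [Fm_eq_Fp_neg]
  have h2 := (Measure.measurePreserving_neg (volume : Measure ℂ)).lintegral_comp
    (f := fun u => ENNReal.ofReal (Fp u)) (ENNReal.measurable_ofReal.comp Fp_meas)
  exact (lintegral_congr h1).trans (h2.trans Jplus)

lemma F_integrable_integral {F : ℂ → ℝ} (hFm : Measurable F) (hFnn : ∀ u, 0 ≤ F u)
    (hJ : ∫⁻ u : ℂ, ENNReal.ofReal (F u) = ENNReal.ofReal (π ^ 2 / 4)) :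
    Integrable F (volume : Measure ℂ) ∧ ∫ u : ℂ, F u = π ^ 2 / 4 := by
  have hint : Integrable F (volume : Measure ℂ) := by
    refine ⟨hFm.aestronglyMeasurable, ?_⟩
    rw [hasFiniteIntegral_iff_ofReal (ae_of_all _ hFnn), hJ]
    exact ENNReal.ofReal_lt_top
  refine ⟨hint, ?_⟩
  rw [integral_eq_lintegral_of_nonneg_ae (ae_of_all _ hFnn) hFm.aestronglyMeasurable, hJ,
    ENNReal.toReal_ofReal (by positivity)]

lemma bound_aux (g : ℂ → ℝ) (hmeas : Measurable g) (R : ℝ)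
    (hsupp : ∀ᵐ u : ℂ ∂volume, R < ‖u‖ → g u = 0)
    (hbd : ∀ᵐ u : ℂ ∂volume, 0 ≤ g u ∧ g u ≤ 1)
    (F : ℂ → ℝ) (hFmeas : Measurable F) (hFnn : ∀ u, 0 ≤ F u)
    (hFint : Integrable F (volume : Measure ℂ)) (hFval : ∫ u : ℂ, F u = π ^ 2 / 4)
    (O : Set ℂ) (hO : IsOpen O) (hne : O.Nonempty)
    (hOR : ∀ u ∈ O, R < ‖u‖) (hOF : ∀ u ∈ O, 0 < F u) :
    Integrable (fun u => g u * F u) (volume : Measure ℂ) ∧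
      (0 ≤ ∫ u : ℂ, g u * F u) ∧ (∫ u : ℂ, g u * F u) < π ^ 2 / 4 := by
  have hgF_int : Integrable (fun u => g u * F u) (volume : Measure ℂ) := by
    refine hFint.mono' ((hmeas.mul hFmeas).aestronglyMeasurable) ?_
    filter_upwards [hbd] with u hu
    rw [Real.norm_eq_abs, abs_mul, abs_of_nonneg hu.1, abs_of_nonneg (hFnn u)]
    exact mul_le_of_le_one_left (hFnn u) hu.2
  have hind_int : Integrable (O.indicator F) (volume : Measure ℂ) :=
    hFint.indicator hO.measurableSet
  have hineq : ∀ᵐ u : ℂ ∂volume, g u * F u + O.indicator F u ≤ F u := by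
    filter_upwards [hsupp, hbd] with u h1 h2
    by_cases hu : u ∈ O
    · rw [indicator_of_mem hu, h1 (hOR u hu), zero_mul, zero_add]
    · rw [indicator_of_notMem hu, add_zero]
      exact mul_le_of_le_one_left (hFnn u) h2.2
  have hmono : (∫ u : ℂ, (g u * F u + O.indicator F u)) ≤ ∫ u : ℂ, F u :=
    integral_mono_ae (hgF_int.add hind_int) hFint hineq
  rw [integral_add hgF_int hind_int] at hmono
  have hpos : 0 < ∫ u : ℂ, O.indicator F u := by
    rw [integral_indicator hO.measurableSet]
    rw [integral_pos_iff_support_of_nonneg hFnn hFint.integrableOn]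
    rw [Measure.restrict_apply' hO.measurableSet]
    have hsub : O ⊆ Function.support F ∩ O :=
      fun u hu => ⟨ne_of_gt (hOF u hu), hu⟩
    exact lt_of_lt_of_le (hO.measure_pos volume hne) (measure_mono hsub)
  have hgnn : 0 ≤ ∫ u : ℂ, g u * F u := by
    apply integral_nonneg_of_ae
    filter_upwards [hbd] with u hu
    exact mul_nonneg hu.1 (hFnn u)
  exact ⟨hgF_int, hgnn, by linarith [hFval ▸ hmono]⟩

end Aux

open MeasureTheory

/-- `I_g = -(1/π) ∫_ℂ g(u)/(conj(u+1)·(u-1)) da(u)`. -/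
noncomputable def Ig (g : ℂ → ℝ) : ℂ :=
  -(1 / Real.pi : ℂ) * ∫ u : ℂ, (g u : ℂ) / ((starRingEnd ℂ) (u + 1) * (u - 1))

/-- For `g ∈ G₁`, `|Im(I_g)| < π/2`. -/
theorem abs_im_Ig_lt_pi_div_two
    (g : ℂ → ℝ) (hmeas : Measurable g)
    (hsupp : ∃ R : ℝ, ∀ᵐ u : ℂ ∂volume, R < ‖u‖ → g u = 0)
    (hbd : ∀ᵐ u : ℂ ∂volume, 0 ≤ g u ∧ g u ≤ 1) :
    |(Ig g).im| < Real.pi / 2 := by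
  obtain ⟨R, hsuppR⟩ := hsupp
  set f : ℂ → ℂ := fun u => (g u : ℂ) / ((starRingEnd ℂ) (u + 1) * (u - 1)) with hfdef
  by_cases hf : Integrable f (volume : Measure ℂ)
  swap
  · have : Ig g = -(1 / Real.pi : ℂ) * 0 := by
      rw [Ig, integral_undef hf]
    rw [this, mul_zero]
    simp only [Complex.zero_im, abs_zero]
    linarith [pi_pos]
  -- the two open sets
  have hOpen : ∀ c : ℝ, IsOpen {u : ℂ | R < ‖u‖ ∧ c * u.im > 0} := by
    intro c
    apply IsOpen.inter
    · exact isOpen_lt continuous_const continuous_norm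
    · exact isOpen_lt continuous_const (continuous_const.mul Complex.continuous_im)
  -- bound for Fp
  obtain ⟨hFp_int, hFp_val⟩ := F_integrable_integral Fp_meas Fp_nonneg Jplus
  obtain ⟨hFm_int, hFm_val⟩ := F_integrable_integral Fm_meas Fm_nonneg Jminus
  have hboundp := bound_aux g hmeas R hsuppR hbd Fp Fp_meas Fp_nonneg hFp_int hFp_val
    {u : ℂ | R < ‖u‖ ∧ 1 * u.im > 0} (hOpen 1)
    ⟨((|R| + 1 : ℝ) : ℂ) * Complex.I, by
      have habs : ‖((|R| + 1 : ℝ) : ℂ) * Complex.I‖ = |R| + 1 := by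
        rw [norm_mul, Complex.norm_I, Complex.norm_real, mul_one, Real.norm_eq_abs,
          abs_of_nonneg (by positivity)]
      constructor
      · rw [habs]
        linarith [le_abs_self R]
      · simp
        linarith [abs_nonneg R]⟩
    (fun u hu => hu.1)
    (fun u hu => by
      have him : 0 < u.im := by simpa using hu.2
      have h1 : u + 1 ≠ 0 := fun h => by
        have := congrArg Complex.im h; simp at this; simp [this] at him
      have h2 : u - 1 ≠ 0 := fun h => by
        have := congrArg Complex.im h; simp at this; simp [this] at him
      unfold Fp
      apply div_pos
      · rw [max_eq_left him.le]; exact him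
      · exact mul_pos (Complex.normSq_pos.mpr h1) (Complex.normSq_pos.mpr h2))
  have hboundm := bound_aux g hmeas R hsuppR hbd Fm Fm_meas Fm_nonneg hFm_int hFm_val
    {u : ℂ | R < ‖u‖ ∧ (-1) * u.im > 0} (hOpen (-1))
    ⟨-(((|R| + 1 : ℝ) : ℂ) * Complex.I), by
      have habs : ‖-(((|R| + 1 : ℝ) : ℂ) * Complex.I)‖ = |R| + 1 := by
        rw [norm_neg, norm_mul, Complex.norm_I, Complex.norm_real, mul_one, Real.norm_eq_abs,
          abs_of_nonneg (by positivity)]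
      constructor
      · rw [habs]
        linarith [le_abs_self R]
      · simp
        linarith [abs_nonneg R]⟩
    (fun u hu => hu.1)
    (fun u hu => by
      have him : u.im < 0 := by
        have := hu.2; simp at this; linarith
      have h1 : u + 1 ≠ 0 := fun h => by
        have := congrArg Complex.im h; simp at this; simp [this] at him
      have h2 : u - 1 ≠ 0 := fun h => by
        have := congrArg Complex.im h; simp at this; simp [this] at him
      unfold Fm
      apply div_pos
      · rw [max_eq_left (by linarith : (0:ℝ) ≤ -u.im)]; linarith
      · exact mul_pos (Complex.normSq_pos.mpr h1) (Complex.normSq_pos.mpr h2))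
  obtain ⟨hgp_int, hgp0, hgp⟩ := hboundp
  obtain ⟨hgm_int, hgm0, hgm⟩ := hboundm
  -- pointwise imaginary part identity
  have hmax : ∀ a : ℝ, max (-a) 0 = max a 0 - a := by
    intro a
    rcases le_total a 0 with h | h
    · rw [max_eq_left (neg_nonneg.mpr h), max_eq_right h]; ring
    · rw [max_eq_right (neg_nonpos.mpr h), max_eq_left h]; ring
  have him : ∀ u : ℂ, (f u).im = 2 * (g u * Fm u) - 2 * (g u * Fp u) := by
    intro u
    have hwim : ((starRingEnd ℂ) (u + 1) * (u - 1)).im = 2 * u.im := by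
      simp only [Complex.mul_im, Complex.conj_re, Complex.conj_im, Complex.add_re,
        Complex.add_im, Complex.sub_re, Complex.sub_im, Complex.one_re, Complex.one_im]
      ring
    have hwns : Complex.normSq ((starRingEnd ℂ) (u + 1) * (u - 1))
        = Complex.normSq (u + 1) * Complex.normSq (u - 1) := by
      rw [map_mul, Complex.normSq_conj]
    rw [hfdef]
    simp only
    rw [Complex.div_im, hwim, hwns]
    unfold Fp Fm
    rw [hmax, sub_div]
    simp only [Complex.ofReal_im, Complex.ofReal_re, zero_mul, zero_div]
    ring
  have him2 : (∫ u : ℂ, f u).im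
      = 2 * (∫ u : ℂ, g u * Fm u) - 2 * (∫ u : ℂ, g u * Fp u) := by
    have h1 := integral_im hf
    simp only [RCLike.im_to_complex] at h1
    rw [← h1]
    rw [integral_congr_ae (ae_of_all _ him)]
    rw [integral_sub ((hgm_int.const_mul 2)) ((hgp_int.const_mul 2))]
    rw [integral_const_mul, integral_const_mul]
  -- conclusion
  have hIgim : (Ig g).im = -(1 / Real.pi) * ((∫ u : ℂ, f u).im) := by
    have hc : (-(1 / Real.pi : ℂ)) = ((-(1 / Real.pi) : ℝ) : ℂ) := by push_cast; ring
    rw [Ig, hc, Complex.im_ofReal_mul]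
  rw [hIgim, him2]
  set a := ∫ u : ℂ, g u * Fp u
  set b := ∫ u : ℂ, g u * Fm u
  have hπ := pi_pos
  rw [abs_mul, abs_neg, abs_of_pos (by positivity : (0:ℝ) < 1 / Real.pi)]
  have habs : |2 * b - 2 * a| < Real.pi ^ 2 / 2 := by
    rw [abs_lt]
    constructor <;> linarith
  calc 1 / Real.pi * |2 * b - 2 * a| < 1 / Real.pi * (Real.pi ^ 2 / 2) := by
        exact mul_lt_mul_of_pos_left habs (by positivity)
    _ = Real.pi / 2 := by field_simp
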